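/- Let E be a phase observable with phase matrix (c_{n,m}) and N = ∑ n|n⟩⟨n| the number observable with spectral projections P_n = |n⟩⟨n|. Then the set com(N,E) of vectors φ satisfying P_n E(X) φ = E(X) P_n φ for all n ∈ ℕ and all Borel X ⊆ [0,2π) equals {φ : ⟨n|φ⟩ = 0 whenever c_{n,m} ≠ 0 for some m ≠ n}. -/

import Mathlib

open MeasureTheory Complex

/-! A vector commutes with the coordinate projection `P_n` under `E(X)` exactly when the
off-diagonal entries `⟨i|E(X)|n⟩ ⟨n|φ⟩` (`i ≠ n`) and `⟨n|E(X)|m⟩ ⟨m|φ⟩` (`m ≠ n`) vanish.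
Since `⟨i|E(X)|n⟩ = c_{i,n} (1/2π) ∫_X e^{i(i-n)x} dx`, and the integral of the nowhere-vanishing
function `e^{i(i-n)x}` cannot vanish on every Borel subset of `[0,2π)`, the first family vanishes
for all `X` iff `⟨n|φ⟩ = 0` or `c_{i,n} = 0`; the hermitian symmetry `c_{n,m} = conj c_{m,n}`
turns the condition on the second family into the same one. -/

/-- `phaseInt X n m = (1/2π) ∫_X e^{i(n-m)x} dx`. -/
noncomputable def phaseInt (X : Set ℝ) (n m : ℕ) : ℂ :=
  ((1 / (2 * Real.pi) : ℝ) : ℂ) *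
    ∫ x in X, Complex.exp (Complex.I * ((n : ℂ) - (m : ℂ)) * (x : ℂ))

theorem exists_setIntegral_ne_zero {α E : Type*} [MeasurableSpace α] {μ : Measure α}
    [NormedAddCommGroup E] [NormedSpace ℝ E] [CompleteSpace E] {f : α → E} {S : Set α}
    (hS : MeasurableSet S) (hμS : μ S ≠ 0) (hμS' : μ S ≠ ⊤) (hf : IntegrableOn f S μ)
    (hf0 : ∀ x, f x ≠ 0) :
    ∃ X ⊆ S, MeasurableSet X ∧ ∫ x in X, f x ∂μ ≠ 0 := by
  by_contra! h
  have : IsFiniteMeasure (μ.restrict S) := isFiniteMeasure_restrict.mpr hμS'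
  have hf_ae : f =ᵐ[μ.restrict S] 0 := by
    refine ae_eq_zero_of_forall_setIntegral_eq_of_sigmaFinite
      (fun s _ _ => hf.integrable.integrableOn) fun s hs _ => ?_
    rw [Measure.restrict_restrict hs]
    exact h _ Set.inter_subset_right (hs.inter hS)
  simp [Filter.EventuallyEq, ae_iff, hf0, hμS] at hf_ae

theorem exists_phaseInt_ne_zero (n m : ℕ) :
    ∃ X ⊆ Set.Ico 0 (2 * Real.pi), MeasurableSet X ∧ phaseInt X n m ≠ 0 := by
  obtain ⟨X, hXS, hX, hX0⟩ := exists_setIntegral_ne_zero (S := Set.Ico 0 (2 * Real.pi))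
    (μ := volume) measurableSet_Ico (by simp [Real.pi_pos]) measure_Ico_lt_top.ne
    (f := fun x : ℝ => Complex.exp (Complex.I * ((n : ℂ) - (m : ℂ)) * (x : ℂ)))
    ((Continuous.integrableOn_Icc (by fun_prop)).mono_set Set.Ico_subset_Icc_self)
    (fun x => Complex.exp_ne_zero _)
  exact ⟨X, hXS, hX, mul_ne_zero (by simp [Real.pi_ne_zero]) hX0⟩

namespace HilbertBasis

variable {ι 𝕜 H : Type*} [RCLike 𝕜] [NormedAddCommGroup H] [InnerProductSpace 𝕜 H]
  (e : HilbertBasis ι 𝕜 H) (T : H →L[𝕜] H) (φ : H) {n : ι}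

theorem hasSum_inner_apply (n : ι) :
    HasSum (fun m => inner 𝕜 (e m) φ * inner 𝕜 (e n) (T (e m))) (inner 𝕜 (e n) (T φ)) := by
  simpa [e.repr_apply_apply, inner_smul_right] using
    (e.hasSum_repr φ).mapL ((innerSL 𝕜 (e n)).comp T)

theorem inner_mul_inner_apply_eq_zero_of_commute_proj
    (h : inner 𝕜 (e n) (T φ) • e n = T (inner 𝕜 (e n) φ • e n)) {i : ι} (hi : i ≠ n) :
    inner 𝕜 (e n) φ * inner 𝕜 (e i) (T (e n)) = 0 := by
  simpa [inner_smul_right, e.orthonormal.inner_eq_zero hi] using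
    congrArg (inner 𝕜 (e i)) h.symm

theorem commute_proj_of_inner_mul_inner_apply_eq_zero
    (hcol : ∀ i ≠ n, inner 𝕜 (e n) φ * inner 𝕜 (e i) (T (e n)) = 0)
    (hrow : ∀ m ≠ n, inner 𝕜 (e m) φ * inner 𝕜 (e n) (T (e m)) = 0) :
    inner 𝕜 (e n) (T φ) • e n = T (inner 𝕜 (e n) φ • e n) := by
  have hdiag : inner 𝕜 (e n) (T φ) = inner 𝕜 (e n) φ * inner 𝕜 (e n) (T (e n)) :=
    (e.hasSum_inner_apply T φ n).unique (hasSum_single n hrow)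
  apply e.repr.injective
  ext i
  rw [e.repr_apply_apply, e.repr_apply_apply, map_smul, inner_smul_right, inner_smul_right]
  obtain rfl | hi := eq_or_ne i n
  · simp [hdiag, e.orthonormal.1 i]
  · rw [e.orthonormal.inner_eq_zero hi, mul_zero, hcol i hi]

end HilbertBasis

theorem stmt12 {H : Type*} [NormedAddCommGroup H] [InnerProductSpace ℂ H] [CompleteSpace H]
    (e : HilbertBasis ℕ ℂ H) (ξ : ℕ → H)
    (c : ℕ → ℕ → ℂ) (hc : ∀ n m, c n m = (inner ℂ (ξ n) (ξ m) : ℂ))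
    (E : Set ℝ → (H →L[ℂ] H))
    (hE : ∀ X : Set ℝ, MeasurableSet X → X ⊆ Set.Ico 0 (2 * Real.pi) → ∀ n m : ℕ,
      (inner ℂ (e n) (E X (e m)) : ℂ) = c n m * phaseInt X n m)
    (φ : H) :
    (∀ (n : ℕ) (X : Set ℝ), MeasurableSet X → X ⊆ Set.Ico 0 (2 * Real.pi) →
      (inner ℂ (e n) (E X φ) : ℂ) • (e n : H) = E X ((inner ℂ (e n) φ : ℂ) • (e n : H)))
    ↔ (∀ n : ℕ, (∃ m : ℕ, m ≠ n ∧ c n m ≠ 0) → (inner ℂ (e n) φ : ℂ) = 0) := by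
  have hc_symm : ∀ a b, c a b ≠ 0 → c b a ≠ 0 := by
    intro a b hab
    rwa [hc, ← inner_conj_symm, map_ne_zero, ← hc]
  constructor
  · rintro h n ⟨m, hmn, hcnm⟩
    obtain ⟨X, hXI, hX, hpX⟩ := exists_phaseInt_ne_zero m n
    have hcol := e.inner_mul_inner_apply_eq_zero_of_commute_proj (E X) φ (h n X hX hXI) hmn
    rw [hE X hX hXI] at hcol
    exact (mul_eq_zero.mp hcol).resolve_right (mul_ne_zero (hc_symm n m hcnm) hpX)
  · intro h n X hX hXI
    refine e.commute_proj_of_inner_mul_inner_apply_eq_zero (E X) φ (fun i hi => ?_) fun m hm => ?_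
    · rw [hE X hX hXI]
      by_cases hin : c i n = 0
      · simp [hin]
      · simp [h n ⟨i, hi, hc_symm i n hin⟩]
    · rw [hE X hX hXI]
      by_cases hnm : c n m = 0
      · simp [hnm]
      · simp [h m ⟨n, hm.symm, hc_symm n m hnm⟩]
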